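/- (Lemma 3, second part, supremum form.) Let V be a real topological vector space and C ⊆ V a nonempty open convex cone with C ≠ V. Let T, Λ ∈ closure(C) \ C, and assume that (1−s) • T + s • Λ ∈ C for every s ∈ (0,1). Then for every t ∈ (0,1), writing L_t := (1−t) • T + t • Λ, one has sSup {δ ∈ ℝ | L_t − δ • Λ ∈ C} = t; that is, the dual threshold σ'(L_t, Λ) equals t. -/

import Mathlib

/-!
Write `L_t - δ • Λ = (1 - t) • T + (t - δ) • Λ`. A combination `a • T + b • Λ` with `a > 0` lies in
the open cone `C` exactly when `b > 0`: for `b > 0` it is a positive multiple of a point of the open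
segment `(T, Λ)`, while for `b ≤ 0` adding `(-b) • Λ ∈ closure C` would keep it in `C` (an open set
absorbs its closure under addition) and put `a • T`, hence `T`, in `C`. So the set of admissible `δ`
is `Iio t`, whose supremum is `t`.
-/

open Set Pointwise

namespace ConvexCone

theorem add_mem_of_mem_closure {𝕜 V : Type*} [Semiring 𝕜] [PartialOrder 𝕜] [AddCommGroup V]
    [SMul 𝕜 V] [TopologicalSpace V] [IsTopologicalAddGroup V] (K : ConvexCone 𝕜 V)
    (hK : IsOpen (K : Set V)) {x y : V} (hx : x ∈ K) (hy : y ∈ closure (K : Set V)) :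
    x + y ∈ K := by
  have hxy : x + y ∈ (K : Set V) + K := hK.add_closure (K : Set V) ▸ add_mem_add hx hy
  obtain ⟨u, hu, v, hv, huv⟩ := hxy
  exact huv ▸ K.add_mem hu hv

section

variable {𝕜 V : Type*} [Field 𝕜] [LinearOrder 𝕜] [IsStrictOrderedRing 𝕜]
  [AddCommGroup V] [Module 𝕜 V]

def ofPosCombination (C : Set V)
    (hC : ∀ x ∈ C, ∀ y ∈ C, ∀ a b : 𝕜, 0 < a → 0 < b → a • x + b • y ∈ C) : ConvexCone 𝕜 V where
  carrier := C
  smul_mem' c hc x hx := by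
    simpa [← add_smul] using hC x hx x hx (c / 2) (c / 2) (by positivity) (by positivity)
  add_mem' x hx y hy := by simpa using hC x hx y hy 1 1 one_pos one_pos

variable (K : ConvexCone 𝕜 V)

theorem smul_notMem {x : V} (hx : x ∉ K) {a : 𝕜} (ha : 0 < a) : a • x ∉ K := fun hax ↦
  hx (by simpa [inv_smul_smul₀ ha.ne'] using K.smul_mem (inv_pos.2 ha) hax)

variable [TopologicalSpace V] [IsTopologicalAddGroup V]

theorem add_smul_mem_of_mem_closure (hK : IsOpen (K : Set V)) {x y : V} {c : 𝕜} (hx : x ∈ K)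
    (hy : y ∈ closure (K : Set V)) (hc : 0 ≤ c) : x + c • y ∈ K := by
  rcases hc.eq_or_lt with rfl | hc
  · simpa using hx
  have hmem : c⁻¹ • x + y ∈ K := K.add_mem_of_mem_closure hK (K.smul_mem (inv_pos.2 hc) hx) hy
  simpa [smul_add, smul_inv_smul₀ hc.ne'] using K.smul_mem hc hmem

theorem smul_add_smul_mem_iff (hK : IsOpen (K : Set V)) {T Λ : V} (hT : T ∉ K)
    (hΛ : Λ ∈ closure (K : Set V)) (hseg : openSegment 𝕜 T Λ ⊆ K) {a b : 𝕜} (ha : 0 < a) :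
    a • T + b • Λ ∈ K ↔ 0 < b := by
  refine ⟨fun hmem ↦ ?_, fun hb ↦ ?_⟩
  · by_contra! hb
    have hT' : (a • T + b • Λ) + (-b) • Λ ∈ K :=
      K.add_smul_mem_of_mem_closure hK hmem hΛ (neg_nonneg.2 hb)
    exact K.smul_notMem hT ha (by simpa [neg_smul] using hT')
  · have hab : 0 < a + b := add_pos ha hb
    have hpt : (a / (a + b)) • T + (b / (a + b)) • Λ ∈ K :=
      hseg ⟨_, _, div_pos ha hab, div_pos hb hab, by field_simp, rfl⟩
    convert K.smul_mem hab hpt using 1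
    simp only [smul_add, smul_smul, mul_div_cancel₀ _ hab.ne']

end

end ConvexCone

theorem lemma_one_over_t_second_part_sup_general
    {V : Type*} [AddCommGroup V] [Module ℝ V] [TopologicalSpace V]
    [IsTopologicalAddGroup V]
    (C : Set V) (hC_open : IsOpen C)
    (hC_cone : ∀ x ∈ C, ∀ y ∈ C, ∀ a b : ℝ, 0 < a → 0 < b → a • x + b • y ∈ C)
    (T : V) (hT : T ∈ closure C \ C) (Λ : V) (hΛ : Λ ∈ closure C \ C)
    (hseg : ∀ s ∈ Set.Ioo (0 : ℝ) 1, (1 - s) • T + s • Λ ∈ C) :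
    ∀ t ∈ Set.Ioo (0 : ℝ) 1,
      sSup {d : ℝ | ((1 - t) • T + t • Λ) - d • Λ ∈ C} = t := by
  intro t ht
  let K := ConvexCone.ofPosCombination C hC_cone
  have hsegK : openSegment ℝ T Λ ⊆ K := by
    rw [openSegment_eq_image]
    exact image_subset_iff.2 hseg
  have hadmissible : {d : ℝ | ((1 - t) • T + t • Λ) - d • Λ ∈ C} = Iio t := by
    ext d
    have hrw : ((1 - t) • T + t • Λ) - d • Λ = (1 - t) • T + (t - d) • Λ := by module
    rw [mem_ofPred_eq, hrw, mem_Iio, ← sub_pos]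
    exact K.smul_add_smul_mem_iff hC_open hT.2 hΛ.1 hsegK (sub_pos.2 ht.2)
  rw [hadmissible, csSup_Iio]

/-- Lemma 3, second part, supremum form: with `T, Λ ∈ closure C \ C`
and `(1-s) • T + s • Λ ∈ C` for every `s ∈ (0,1)`, we have
`σ'(L_t, Λ) = sSup {δ | L_t - δ • Λ ∈ C} = t` for every `t ∈ (0,1)`,
where `L_t = (1-t) • T + t • Λ`. -/
theorem lemma_one_over_t_second_part_sup
    {V : Type*} [AddCommGroup V] [Module ℝ V] [TopologicalSpace V]
    [IsTopologicalAddGroup V] [ContinuousSMul ℝ V]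
    (C : Set V) (hC_open : IsOpen C) (hC_ne : C.Nonempty) (hC_proper : C ≠ Set.univ)
    (hC_cone : ∀ x ∈ C, ∀ y ∈ C, ∀ a b : ℝ, 0 < a → 0 < b → a • x + b • y ∈ C)
    (T : V) (hT : T ∈ closure C \ C) (Λ : V) (hΛ : Λ ∈ closure C \ C)
    (hseg : ∀ s ∈ Set.Ioo (0 : ℝ) 1, (1 - s) • T + s • Λ ∈ C) :
    ∀ t ∈ Set.Ioo (0 : ℝ) 1,
      sSup {d : ℝ | ((1 - t) • T + t • Λ) - d • Λ ∈ C} = t :=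
  lemma_one_over_t_second_part_sup_general C hC_open hC_cone T hT Λ hΛ hseg
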